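/- arXiv:2010.07072 — 5 statements merged into one kernel-verified Lean document; each statement's English description precedes it below -/
import Mathlib

section
/- For all t, t' ∈ [0,1], the series Σ_{k=1}^∞ 2 sin(πkt) sin(πkt') / (π²k²) converges and equals min(t,t') − t t'. -/
/-!
By `2 sin a sin b = cos (a - b) - cos (a + b)`, the series is the difference of two instances of
the Fourier series `∑_{n ≥ 1} cos (2πnx) / n² = π² B₂(x)` on `[0, 1]`, taken at
`x = |t - t'| / 2` and `x = (t + t') / 2`. Since `B₂(x) = x² - x + 1/6`, the difference
`B₂(|t - t'|/2) - B₂((t + t')/2)` is `(t + t' - |t - t'|) / 2 - t t' = min t t' - t t'`.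
-/

open Real

theorem min_eq_add_sub_abs_div_two {α : Type*} [Field α] [LinearOrder α] [IsStrictOrderedRing α]
    (a b : α) : min a b = (a + b - |a - b|) / 2 := by
  rcases le_total a b with h | h
  · rw [min_eq_left h, abs_of_nonpos (sub_nonpos.mpr h)]; ring
  · rw [min_eq_right h, abs_of_nonneg (sub_nonneg.mpr h)]; ring

theorem hasSum_cos_div_sq {x : ℝ} (hx : x ∈ Set.Icc (0 : ℝ) 1) :
    HasSum (fun n : ℕ => cos (2 * π * (n + 1) * x) / ((n : ℝ) + 1) ^ 2)
      (π ^ 2 * (x ^ 2 - x + 6⁻¹)) := by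
  have h := (hasSum_nat_add_iff' 1).mpr (hasSum_one_div_nat_pow_mul_cos one_ne_zero hx)
  -- the removed `n = 0` term is `1 / 0 ^ 2 * cos 0 = 0`
  have hval : π ^ 2 * (x ^ 2 - x + 6⁻¹) =
      (-1) ^ (1 + 1) * (2 * π) ^ (2 * 1) / 2 / (Nat.factorial (2 * 1) : ℝ) *
          bernoulliFun (2 * 1) x -
        ∑ i ∈ Finset.range 1, 1 / (i : ℝ) ^ (2 * 1) * cos (2 * π * i * x) := by
    simp only [Nat.mul_one, bernoulliFun_two, Finset.sum_range_one, Nat.cast_zero,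
      zero_pow two_ne_zero, div_zero, zero_mul, sub_zero, Nat.factorial]
    push_cast
    ring
  rw [hval]
  exact h.congr_fun fun n => by push_cast; ring

/-- Mercer expansion of the Brownian-bridge kernel: for `t, t' ∈ [0,1]`, the
series `∑_{k≥1} 2 sin(πkt) sin(πkt') / (π²k²)` converges with sum `min(t,t') - t t'`. -/
theorem bbKernel_mercer (t : ℝ) (ht : t ∈ Set.Icc (0 : ℝ) 1)
    (t' : ℝ) (ht' : t' ∈ Set.Icc (0 : ℝ) 1) :
    HasSum
      (fun k : ℕ =>
        2 * Real.sin (π * (k + 1) * t) * Real.sin (π * (k + 1) * t') /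
          (π ^ 2 * ((k : ℝ) + 1) ^ 2))
      (min t t' - t * t') := by
  obtain ⟨ht0, ht1⟩ := ht
  obtain ⟨ht0', ht1'⟩ := ht'
  have hdiff : |t - t'| / 2 ∈ Set.Icc (0 : ℝ) 1 := by
    have : |t - t'| ≤ 1 := abs_sub_le_iff.mpr ⟨by linarith, by linarith⟩
    constructor <;> [positivity; linarith]
  have hmean : (t + t') / 2 ∈ Set.Icc (0 : ℝ) 1 := ⟨by linarith, by linarith⟩
  have hval : min t t' - t * t' =
      (π ^ 2 * ((|t - t'| / 2) ^ 2 - |t - t'| / 2 + 6⁻¹) -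
        π ^ 2 * (((t + t') / 2) ^ 2 - (t + t') / 2 + 6⁻¹)) / π ^ 2 := by
    rw [min_eq_add_sub_abs_div_two, div_pow, sq_abs]
    field_simp
    ring
  rw [hval]
  refine ((hasSum_cos_div_sq hdiff).sub (hasSum_cos_div_sq hmean)).div_const (π ^ 2) |>.congr_fun
    fun k => ?_
  have hdiff_arg : 2 * π * (k + 1) * (|t - t'| / 2) = |π * (k + 1) * t - π * (k + 1) * t'| := by
    rw [← mul_sub, abs_mul, abs_of_pos (by positivity : 0 < π * ((k : ℝ) + 1))]
    ring
  rw [two_mul_sin_mul_sin, hdiff_arg, cos_abs]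
  field_simp
end

section
/- For every positive integer j and every s ∈ (0,1), ∫₀¹ χ(s,s') f_{χ,j}(s') ds' = (1/(j(j+1))) · f_{χ,j}(s); that is, the functions f_{χ,j} are eigenfunctions of the integral operator on L²(0,1) with the Anderson–Darling kernel χ, with eigenvalues 1/(j(j+1)). -/
/-!
`ψ(s,t) = min(s,t) - st` is the Green's function of `-d²/dt²` on `[0,1]` with Dirichlet boundary
conditions, and the square-root weights of `χ` cancel against the factor `√(s(1-s))` of
`f_{χ,j}`. It therefore suffices that `g(s) = s(1-s) q_j(2s-1)`, which vanishes at `0` and `1`,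
satisfies `-g'' = j(j+1) q_j(2s-1)`. Since `1 - (2s-1)² = 4s(1-s)`, this is the identity
`((1-u²) q_j)'' = -j(j+1) q_j`: as `q_j = P_j'` is the derivative of the Legendre polynomial
`P_j`, it is Legendre's equation `((1-u²) P_j')' = -j(j+1) P_j` differentiated once. It follows
from the three-term recurrence through the first-order identities for `(1-u²) q_j'` and
`(1-u²) q_{j+1}'`.
-/

open Real intervalIntegral

/-- The polynomials `q_j`: `q_1(u) = 1`, `q_2(u) = 3u`, and for `j ≥ 2`,
`q_{j+1}(u) = (1/j)[(2j+1) u q_j(u) - (j+1) q_{j-1}(u)]`.  (`q 0` is an unused dummy.) -/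
noncomputable def adPoly : ℕ → ℝ → ℝ
  | 0 => fun _ => 0
  | 1 => fun _ => 1
  | 2 => fun u => 3 * u
  | j + 3 => fun u =>
      (1 / ((j : ℝ) + 2)) *
        ((2 * ((j : ℝ) + 2) + 1) * u * adPoly (j + 2) u - (((j : ℝ) + 2) + 1) * adPoly (j + 1) u)

/-- The functions `f_{χ,j}(s) = 2 √((2j+1)/(j(j+1))) √(s(1-s)) q_j(2s-1)`. -/
noncomputable def adEigenfun (j : ℕ) (s : ℝ) : ℝ :=
  2 * Real.sqrt ((2 * (j : ℝ) + 1) / ((j : ℝ) * ((j : ℝ) + 1))) *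
    Real.sqrt (s * (1 - s)) * adPoly j (2 * s - 1)

/-- The Anderson–Darling kernel `χ(s,s') = (min(s,s') - s s')/√(s(1-s)s'(1-s'))`. -/
noncomputable def adKernel (s s' : ℝ) : ℝ :=
  (min s s' - s * s') / Real.sqrt (s * (1 - s) * s' * (1 - s'))

open Polynomial Set
open MeasureTheory (volume)

noncomputable def adPolynomial : ℕ → ℝ[X]
  | 0 => 0
  | 1 => 1
  | 2 => 3 * X
  | j + 3 => C (1 / ((j : ℝ) + 2)) *
      ((2 * ((j : ℝ[X]) + 2) + 1) * X * adPolynomial (j + 2) -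
        ((j : ℝ[X]) + 2 + 1) * adPolynomial (j + 1))

theorem adPoly_eq_eval (j : ℕ) (u : ℝ) : adPoly j u = (adPolynomial j).eval u := by
  induction j using adPoly.induct <;> simp [adPoly, adPolynomial, *]

theorem adPolynomial_recurrence (j : ℕ) :
    ((j : ℝ[X]) + 1) * adPolynomial (j + 2) =
      (2 * (j : ℝ[X]) + 3) * X * adPolynomial (j + 1) - ((j : ℝ[X]) + 2) * adPolynomial j := by
  cases j with
  | zero => simp [adPolynomial]
  | succ k =>
    have hinv : ((k : ℝ[X]) + 2) * C (1 / ((k : ℝ) + 2)) = 1 := by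
      rw [show ((k : ℝ[X]) + 2) = C ((k : ℝ) + 2) by rw [map_add, map_natCast, map_ofNat], ← C_mul,
        mul_one_div_cancel (by positivity), C_1]
    simp only [adPolynomial, Nat.cast_add, Nat.cast_one]
    linear_combination ((2 * ((k : ℝ[X]) + 2) + 1) * X * adPolynomial (k + 2)
      - ((k : ℝ[X]) + 2 + 1) * adPolynomial (k + 1)) * hinv

theorem one_sub_X_sq_mul_derivative_adPolynomial (j : ℕ) :
    (1 - X ^ 2) * derivative (adPolynomial j) =
      ((j : ℝ[X]) + 2) * X * adPolynomial j - (j : ℝ[X]) * adPolynomial (j + 1) := by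
  induction j using Nat.twoStepInduction with
  | zero => simp [adPolynomial]
  | one => simp [adPolynomial]; ring
  | more j ih₀ ih₁ =>
    have hrec₀ := adPolynomial_recurrence j
    have hrec₁ := adPolynomial_recurrence (j + 1)
    have hder := congrArg derivative hrec₀
    simp only [derivative_mul, derivative_sub, derivative_add, derivative_natCast,
      derivative_ofNat, derivative_X, derivative_one] at hder
    push_cast at *
    refine mul_left_cancel₀ (Nat.cast_add_one_ne_zero (R := ℝ[X]) j) ?_
    linear_combination (1 - X ^ 2) * hder + ((2 * (j : ℝ[X]) + 3) * X) * ih₁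
      - ((j : ℝ[X]) + 2) * ih₀ - (((j : ℝ[X]) + 2) * X) * hrec₀ + ((j : ℝ[X]) + 1) * hrec₁

theorem one_sub_X_sq_mul_derivative_adPolynomial_succ (j : ℕ) :
    (1 - X ^ 2) * derivative (adPolynomial (j + 1)) =
      ((j : ℝ[X]) + 2) * adPolynomial j - (j : ℝ[X]) * X * adPolynomial (j + 1) := by
  have h := one_sub_X_sq_mul_derivative_adPolynomial (j + 1)
  push_cast at h
  linear_combination h - adPolynomial_recurrence j

theorem derivative_derivative_one_sub_X_sq_mul_adPolynomial (j : ℕ) :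
    derivative (derivative ((1 - X ^ 2) * adPolynomial j)) =
      -((j : ℝ[X]) * ((j : ℝ[X]) + 1)) * adPolynomial j := by
  have hS := one_sub_X_sq_mul_derivative_adPolynomial j
  have hR := one_sub_X_sq_mul_derivative_adPolynomial_succ j
  have hM : derivative ((1 - X ^ 2) * adPolynomial j) =
      (j : ℝ[X]) * X * adPolynomial j - (j : ℝ[X]) * adPolynomial (j + 1) := by
    rw [derivative_mul]
    simp only [derivative_sub, derivative_one, derivative_X_sq, map_ofNat]
    linear_combination hS
  have hne : (1 - X ^ 2 : ℝ[X]) ≠ 0 := fun h => by simpa using congrArg (eval 0) h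
  refine mul_left_cancel₀ hne ?_
  rw [hM]
  simp only [derivative_mul, derivative_sub, derivative_natCast, derivative_X]
  linear_combination (j : ℝ[X]) * X * hS - (j : ℝ[X]) * hR

theorem derivative_derivative_comp_two_mul_X_sub_one {R : Type*} [CommRing R] (p : R[X]) :
    derivative (derivative (p.comp (2 * X - 1))) =
      4 * (derivative (derivative p)).comp (2 * X - 1) := by
  have hL : derivative (2 * X - 1 : R[X]) = 2 := by simp
  simp only [derivative_comp, hL, derivative_mul, derivative_ofNat, zero_mul, zero_add]
  ring

theorem derivative_derivative_X_mul_one_sub_X_mul_adPolynomial_comp (j : ℕ) :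
    derivative (derivative (X * (1 - X) * (adPolynomial j).comp (2 * X - 1))) =
      -((j : ℝ[X]) * ((j : ℝ[X]) + 1)) * (adPolynomial j).comp (2 * X - 1) := by
  have h4 : 4 * (X * (1 - X) * (adPolynomial j).comp (2 * X - 1)) =
      ((1 - X ^ 2) * adPolynomial j).comp (2 * X - 1) := by
    simp only [mul_comp, sub_comp, one_comp, X_pow_comp]
    ring
  refine mul_left_cancel₀ (show (4 : ℝ[X]) ≠ 0 by norm_num) ?_
  calc 4 * derivative (derivative (X * (1 - X) * (adPolynomial j).comp (2 * X - 1)))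
      = derivative (derivative (4 * (X * (1 - X) * (adPolynomial j).comp (2 * X - 1)))) := by
        simp only [derivative_mul, derivative_ofNat, zero_mul, zero_add]
    _ = 4 * (-((j : ℝ[X]) * ((j : ℝ[X]) + 1)) * (adPolynomial j).comp (2 * X - 1)) := by
        rw [h4, derivative_derivative_comp_two_mul_X_sub_one,
          derivative_derivative_one_sub_X_sq_mul_adPolynomial]
        simp [mul_comp]

theorem integral_min_sub_mul_mul_second_deriv {g g' g'' : ℝ → ℝ}
    (hg : ∀ x, HasDerivAt g (g' x) x) (hg' : ∀ x, HasDerivAt g' (g'' x) x)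
    (hg'' : IntervalIntegrable g'' volume 0 1) {s : ℝ} (hs : s ∈ Icc (0 : ℝ) 1) :
    ∫ t in (0 : ℝ)..1, (min s t - s * t) * g'' t = (1 - s) * g 0 + s * g 1 - g s := by
  have hg'_int : ∀ a b, IntervalIntegrable g' volume a b := fun a b =>
    (continuous_iff_continuousAt.2 fun x => (hg' x).continuousAt).intervalIntegrable a b
  have hg''_left : IntervalIntegrable g'' volume 0 s :=
    hg''.mono_set (uIcc_subset_uIcc_left (by rwa [uIcc_of_le zero_le_one]))
  have hg''_right : IntervalIntegrable g'' volume s 1 :=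
    hg''.mono_set (uIcc_subset_uIcc_right (by rwa [uIcc_of_le zero_le_one]))
  have hleft : ∫ t in (0 : ℝ)..s, (min s t - s * t) * g'' t =
      (1 - s) * ∫ t in (0 : ℝ)..s, t * g'' t := by
    rw [← integral_const_mul]
    refine integral_congr fun t ht => ?_
    rw [uIcc_of_le hs.1] at ht
    simp only [min_eq_right ht.2]
    ring
  have hright : ∫ t in s..1, (min s t - s * t) * g'' t =
      s * ∫ t in s..1, (1 - t) * g'' t := by
    rw [← integral_const_mul]
    refine integral_congr fun t ht => ?_
    rw [uIcc_of_le hs.2] at ht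
    simp only [min_eq_left ht.1]
    ring
  have hparts_left := integral_mul_deriv_eq_deriv_mul (u := fun t => t)
    (fun x _ => hasDerivAt_id x) (fun x _ => hg' x) intervalIntegrable_const hg''_left
  have hparts_right := integral_mul_deriv_eq_deriv_mul (u := fun t => 1 - t)
    (fun x _ => (hasDerivAt_id x).const_sub 1) (fun x _ => hg' x) intervalIntegrable_const
    hg''_right
  simp only [one_mul, neg_one_mul, intervalIntegral.integral_neg,
    integral_eq_sub_of_hasDerivAt (fun x _ => hg x) (hg'_int _ _)] at hparts_left hparts_right
  have hψ : Continuous fun t => min s t - s * t := by fun_prop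
  rw [← integral_add_adjacent_intervals (hg''_left.continuousOn_mul hψ.continuousOn)
    (hg''_right.continuousOn_mul hψ.continuousOn), hleft, hright, hparts_left, hparts_right]
  ring

theorem natCast_mul_integral_min_sub_mul_mul_adPoly (j : ℕ) {s : ℝ} (hs : s ∈ Icc (0 : ℝ) 1) :
    ((j : ℝ) * ((j : ℝ) + 1)) * ∫ t in (0 : ℝ)..1, (min s t - s * t) * adPoly j (2 * t - 1) =
      s * (1 - s) * adPoly j (2 * s - 1) := by
  set P : ℝ[X] := X * (1 - X) * (adPolynomial j).comp (2 * X - 1)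
  have hP : ∀ t, P.eval t = t * (1 - t) * adPoly j (2 * t - 1) := fun t => by
    simp [P, adPoly_eq_eval]
  have hP'' : ∀ t, (derivative (derivative P)).eval t =
      -((j : ℝ) * ((j : ℝ) + 1)) * adPoly j (2 * t - 1) := fun t => by
    simp only [P, derivative_derivative_X_mul_one_sub_X_mul_adPolynomial_comp]
    simp [adPoly_eq_eval]
  have hgreen := integral_min_sub_mul_mul_second_deriv (fun x => P.hasDerivAt x)
    (fun x => (derivative P).hasDerivAt x)
    ((derivative (derivative P)).continuous.intervalIntegrable 0 1) hs
  simp only [hP, hP''] at hgreen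
  calc _ = -∫ t in (0 : ℝ)..1,
        (min s t - s * t) * (-((j : ℝ) * ((j : ℝ) + 1)) * adPoly j (2 * t - 1)) := by
        rw [← integral_const_mul, ← intervalIntegral.integral_neg]
        congr 1 with t
        ring
    _ = s * (1 - s) * adPoly j (2 * s - 1) := by rw [hgreen]; simp

theorem adKernel_mul_sqrt_mul {s t : ℝ} (hs : s ∈ Icc (0 : ℝ) 1) (ht : t ∈ Icc (0 : ℝ) 1)
    (a : ℝ) :
    adKernel s t * (√(t * (1 - t)) * a) = (min s t - s * t) * a / √(s * (1 - s)) := by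
  have hT : 0 ≤ t * (1 - t) := mul_nonneg ht.1 (sub_nonneg.2 ht.2)
  rw [adKernel, show s * (1 - s) * t * (1 - t) = s * (1 - s) * (t * (1 - t)) by ring,
    sqrt_mul' _ hT]
  rcases (sqrt_nonneg (t * (1 - t))).eq_or_lt with hT0 | hT0
  · have : t = 0 ∨ t = 1 := by
      have := sqrt_eq_zero'.1 hT0.symm
      rcases mul_eq_zero.1 (le_antisymm this hT) with h | h
      · exact .inl h
      · exact .inr (sub_eq_zero.1 h).symm
    rcases this with rfl | rfl <;> simp [hs.1, hs.2]
  · field_simp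

/-- the `f_{χ,j}` are eigenfunctions of the integral operator on `L²(0,1)`
with the Anderson–Darling kernel `χ`, with eigenvalues `1/(j(j+1))`. -/
theorem adKernel_eigenfunction (j : ℕ) (hj : 1 ≤ j) (s : ℝ) (hs : s ∈ Set.Ioo (0 : ℝ) 1) :
    ∫ s' in (0 : ℝ)..1, adKernel s s' * adEigenfun j s' =
      (1 / ((j : ℝ) * ((j : ℝ) + 1))) * adEigenfun j s := by
  have hs' : s ∈ Icc (0 : ℝ) 1 := Ioo_subset_Icc_self hs
  have hN : (j : ℝ) * ((j : ℝ) + 1) ≠ 0 :=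
    mul_ne_zero (Nat.cast_ne_zero.2 (Nat.one_le_iff_ne_zero.1 hj)) (by positivity)
  set c := 2 * √((2 * (j : ℝ) + 1) / ((j : ℝ) * ((j : ℝ) + 1)))
  have hcongr : EqOn (fun t => adKernel s t * adEigenfun j t)
      (fun t => c / √(s * (1 - s)) * ((min s t - s * t) * adPoly j (2 * t - 1))) (uIcc 0 1) := by
    intro t ht
    rw [uIcc_of_le zero_le_one] at ht
    have hf : adEigenfun j t = √(t * (1 - t)) * (c * adPoly j (2 * t - 1)) := by
      rw [adEigenfun]; ring
    dsimp only
    rw [hf, adKernel_mul_sqrt_mul hs' ht]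
    ring
  have hI : ∫ t in (0 : ℝ)..1, (min s t - s * t) * adPoly j (2 * t - 1) =
      s * (1 - s) * adPoly j (2 * s - 1) / ((j : ℝ) * ((j : ℝ) + 1)) := by
    rw [eq_div_iff hN, mul_comm]
    exact natCast_mul_integral_min_sub_mul_mul_adPoly j hs'
  rw [integral_congr hcongr, integral_const_mul, hI, adEigenfun]
  linear_combination c * adPoly j (2 * s - 1) / ((j : ℝ) * ((j : ℝ) + 1)) *
    div_sqrt (x := s * (1 - s))
end

section
/- Let X_1, ..., X_n be i.i.d. real random variables with a continuous cumulative distribution function H. Then for every c with 1 ≤ c ≤ n−1, the two-sample Cramér–von Mises statistic satisfies E[W_n(c)] = 1/6 + 1/(6n). -/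
/-!
Write `F_c(X_i) - G_d(X_i) = ∑ⱼ aⱼ 𝟙{Xⱼ ≤ Xᵢ}` with `aⱼ = 1/c` for `j < c` and `aⱼ = -1/d`
otherwise, so that `∑ aⱼ = 0` and `∑ aⱼ² = n/(cd)`. After expanding the square, the expectation
of `𝟙{Xⱼ ≤ Xᵢ} 𝟙{Xₖ ≤ Xᵢ}` is the probability that `Xᵢ` is the largest of the distinct values
among `Xᵢ, Xⱼ, Xₖ`; ties have probability zero because the cdf is continuous, so by
exchangeability this is `1 / #{i, j, k}`. Against weights summing to zero only the diagonal
terms survive, giving `E[(F_c - G_d)²(Xᵢ)] = (∑ aⱼ² + aᵢ²)/6`, and summing over `i`,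
`E[W_n(c)] = (cd/n²) · (n + 1) · n/(cd) / 6 = 1/6 + 1/(6n)`.
-/

open MeasureTheory ProbabilityTheory Filter Real

/-- Two-sample Cramér–von Mises statistic `W_n(c)` for the first `c` of `n` observations
versus the rest.  `F_c` is the empirical cdf of `X 0, …, X (c-1)`, `G_d` that of
`X c, …, X (n-1)`, and the `dH_n` integral is the average over all `n` data points. -/
noncomputable def cvmW (X : ℕ → ℝ) (n c : ℕ) : ℝ :=
  ((c : ℝ) * ((n : ℝ) - c) / n) *
    ((∑ i ∈ Finset.range n,
        ((∑ i' ∈ Finset.range c, if X i' ≤ X i then (1 : ℝ) else 0) / c -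
          (∑ i' ∈ Finset.Ico c n, if X i' ≤ X i then (1 : ℝ) else 0) / ((n : ℝ) - c)) ^ 2) / n)

open Finset

theorem nullSingletonClass_of_continuous_cdf {μ : Measure ℝ} [IsProbabilityMeasure μ]
    (hcont : Continuous fun x => (μ (Set.Iic x)).toReal) : NullSingletonClass μ := by
  have hcdf : Continuous (cdf μ) := by
    convert hcont using 1
    exact funext (cdf_eq_real μ)
  refine ⟨fun x => ?_⟩
  rw [← measure_cdf μ, StieltjesFunction.measure_singleton,
    hcdf.continuousAt.continuousWithinAt.leftLim_eq, sub_self, ENNReal.ofReal_zero]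

theorem sq_sum_mul_eq_sum_sum {ι R : Type*} [CommSemiring R] (s : Finset ι) (a f : ι → R) :
    (∑ j ∈ s, a j * f j) ^ 2 = ∑ j ∈ s, ∑ k ∈ s, a j * a k * (f j * f k) := by
  rw [sq, sum_mul_sum]
  simp_rw [mul_mul_mul_comm]

theorem inv_card_triple_eq {ι : Type*} [DecidableEq ι] (i j k : ι) :
    ((#{i, j, k} : ℕ) : ℝ)⁻¹ = 1 / 3 + ((if j = i then 1 else 0) + (if k = i then 1 else 0) +
      (if j = k then 1 else 0) + (if j = i then 1 else 0) * (if k = i then 1 else 0)) / 6 := by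
  by_cases hji : j = i <;> by_cases hki : k = i <;> by_cases hjk : j = k <;>
    simp_all [card_insert_of_notMem, eq_comm] <;> norm_num

theorem sum_sum_mul_mul_inv_card_triple {ι : Type*} [DecidableEq ι] {s : Finset ι} {a : ι → ℝ}
    (ha : ∑ j ∈ s, a j = 0) {i : ι} (hi : i ∈ s) :
    ∑ j ∈ s, ∑ k ∈ s, a j * a k * ((#{i, j, k} : ℕ) : ℝ)⁻¹ = (∑ j ∈ s, a j ^ 2 + a i ^ 2) / 6 := by
  have hδ : ∑ j ∈ s, a j * (if j = i then 1 else 0) = a i := by simp [hi]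
  have hdiag (j : ι) :
      ∑ k ∈ s, (if j = k then a j * a k else 0) = if j ∈ s then a j ^ 2 else 0 := by
    rw [sum_ite_eq]
    simp [sq]
  -- the `1/3`, `j = i` and `k = i` terms factor through `∑ aⱼ = 0`
  have hsplit (j k : ι) : a j * a k * ((#{i, j, k} : ℕ) : ℝ)⁻¹ = a j * a k / 3 +
      ((a j * (if j = i then 1 else 0)) * a k + a j * (a k * (if k = i then 1 else 0)) +
        (if j = k then a j * a k else 0) +
        (a j * (if j = i then 1 else 0)) * (a k * (if k = i then 1 else 0))) / 6 := by
    rw [inv_card_triple_eq]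
    split_ifs <;> ring
  simp only [hsplit, sum_add_distrib, ← sum_div, ← sum_mul_sum, hδ, ha, hdiag, sum_ite_mem,
    inter_self]
  ring

theorem ite_le_mul_ite_le_eq_indicator {Ω ι : Type*} [DecidableEq ι] (X : ι → Ω → ℝ)
    (i j k : ι) (ω : Ω) :
    ((if X j ω ≤ X i ω then 1 else 0) * (if X k ω ≤ X i ω then 1 else 0) : ℝ) =
      {ω | ∀ l ∈ ({i, j, k} : Finset ι), X l ω ≤ X i ω}.indicator 1 ω := by
  by_cases hj : X j ω ≤ X i ω <;> by_cases hk : X k ω ≤ X i ω <;> simp [hj, hk]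

namespace ProbabilityTheory

variable {Ω : Type*} [MeasurableSpace Ω] {P : Measure Ω}

theorem IndepFun.measure_eq_eq_zero [IsFiniteMeasure P] {X Y : Ω → ℝ} (hX : Measurable X)
    (hY : Measurable Y) (h : IndepFun X Y P) [NullSingletonClass (P.map Y)] :
    P {ω | X ω = Y ω} = 0 := by
  have hdiag : MeasurableSet {p : ℝ × ℝ | p.1 = p.2} :=
    measurableSet_eq_fun measurable_fst measurable_snd
  change P ((fun ω => (X ω, Y ω)) ⁻¹' {p | p.1 = p.2}) = 0
  rw [← Measure.map_apply (hX.prodMk hY) hdiag,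
    (indepFun_iff_map_prod_eq_prod_map_map hX.aemeasurable hY.aemeasurable).1 h,
    Measure.prod_apply hdiag]
  simp [Set.preimage]

variable {ι : Type*} {X : ι → Ω → ℝ} {μ : Measure ℝ}

theorem measurableSet_forall_mem_le (hX : ∀ i, Measurable (X i)) (s : Finset ι) (i : ι) :
    MeasurableSet {ω | ∀ l ∈ s, X l ω ≤ X i ω} := by
  simp only [Set.ofPred_forall]
  exact s.measurableSet_biInter fun l _ => measurableSet_le (hX l) (hX i)

theorem iIndepFun.map_eq_pi [Fintype ι] (hX : ∀ i, Measurable (X i)) (h : iIndepFun X P)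
    (hlaw : ∀ i, P.map (X i) = μ) : P.map (fun ω i => X i ω) = Measure.pi fun _ => μ := by
  rw [h.map_fun_eq_pi_map fun i => (hX i).aemeasurable]
  simp_rw [hlaw]

theorem iIndepFun.measure_forall_le_eq_inv_card [IsProbabilityMeasure P] [Fintype ι]
    [NullSingletonClass μ] (hX : ∀ i, Measurable (X i)) (h : iIndepFun X P)
    (hlaw : ∀ i, P.map (X i) = μ) (i : ι) :
    P {ω | ∀ j, X j ω ≤ X i ω} = (Fintype.card ι : ENNReal)⁻¹ := by
  classical
  have : Nonempty ι := ⟨i⟩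
  set E : ι → Set Ω := fun l => {ω | ∀ j, X j ω ≤ X l ω}
  have hE (l : ι) : MeasurableSet (E l) := by
    simpa [E] using measurableSet_forall_mem_le hX univ l
  have hA : MeasurableSet {x : ι → ℝ | ∀ j, x j ≤ x i} := by
    simp only [Set.ofPred_forall]
    exact .iInter fun j => measurableSet_le (measurable_pi_apply j) (measurable_pi_apply i)
  -- `X ∘ swap i l` is again i.i.d. with law `μ`, and it turns `E i` into `E l`
  have hsymm (l : ι) : P (E l) = P (E i) := by
    set σ := Equiv.swap i l
    have hσ : E l = (fun ω j => X (σ j) ω) ⁻¹' {x | ∀ j, x j ≤ x i} := by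
      ext ω
      change (∀ j, X j ω ≤ X l ω) ↔ ∀ j, X (σ j) ω ≤ X (σ i) ω
      rw [Equiv.swap_apply_left]
      exact σ.forall_congr_right.symm
    rw [hσ, ← Measure.map_apply (measurable_pi_lambda _ fun j => hX (σ j)) hA,
      (h.precomp σ.injective).map_eq_pi (fun j => hX (σ j)) (fun j => hlaw (σ j)),
      ← h.map_eq_pi hX hlaw, Measure.map_apply (measurable_pi_lambda _ hX) hA]
    rfl
  have hcover : (⋃ l, E l) = Set.univ :=
    Set.eq_univ_of_forall fun ω => Set.mem_iUnion.2 (Finite.exists_max fun j => X j ω)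
  have hdisj : Pairwise (Function.onFun (AEDisjoint P) E) := by
    intro j l hjl
    have : NullSingletonClass (P.map (X l)) := hlaw l ▸ inferInstance
    refine measure_mono_null (fun ω hω => ?_) ((h.indepFun hjl).measure_eq_eq_zero (hX j) (hX l))
    exact le_antisymm (hω.2 j) (hω.1 l)
  have hsum : P (E i) * Fintype.card ι = 1 := by
    rw [← measure_univ (μ := P), ← hcover, measure_iUnion₀ hdisj fun l => (hE l).nullMeasurableSet,
      tsum_fintype, sum_congr rfl fun l _ => hsymm l, sum_const, nsmul_eq_mul, card_univ,
      mul_comm]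
  exact ENNReal.eq_inv_of_mul_eq_one_left hsum

theorem iIndepFun.measure_forall_mem_le_eq_inv_card [IsProbabilityMeasure P]
    [NullSingletonClass μ] (hX : ∀ i, Measurable (X i)) (h : iIndepFun X P)
    (hlaw : ∀ i, P.map (X i) = μ) {s : Finset ι} {i : ι} (hi : i ∈ s) :
    P {ω | ∀ j ∈ s, X j ω ≤ X i ω} = (#s : ENNReal)⁻¹ := by
  simpa using (h.precomp Subtype.val_injective).measure_forall_le_eq_inv_card
    (fun j : s => hX j) (fun j => hlaw j) ⟨i, hi⟩

section Moments

variable [DecidableEq ι]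

theorem integrable_ite_le_mul_ite_le [IsFiniteMeasure P] (hX : ∀ i, Measurable (X i))
    (i j k : ι) :
    Integrable (fun ω => ((if X j ω ≤ X i ω then 1 else 0) *
      (if X k ω ≤ X i ω then 1 else 0) : ℝ)) P := by
  simp_rw [ite_le_mul_ite_le_eq_indicator]
  exact (integrable_const 1).indicator (measurableSet_forall_mem_le hX _ i)

theorem iIndepFun.integral_ite_le_mul_ite_le [IsProbabilityMeasure P] [NullSingletonClass μ]
    (hX : ∀ i, Measurable (X i)) (h : iIndepFun X P) (hlaw : ∀ i, P.map (X i) = μ)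
    (i j k : ι) :
    ∫ ω, ((if X j ω ≤ X i ω then 1 else 0) * (if X k ω ≤ X i ω then 1 else 0) : ℝ) ∂P =
      ((#{i, j, k} : ℕ) : ℝ)⁻¹ := by
  simp_rw [ite_le_mul_ite_le_eq_indicator]
  rw [integral_indicator_one (measurableSet_forall_mem_le hX _ i), measureReal_def,
    h.measure_forall_mem_le_eq_inv_card hX hlaw (by simp)]
  simp

theorem integrable_sq_sum_mul_ite_le [IsFiniteMeasure P] (hX : ∀ i, Measurable (X i))
    (s : Finset ι) (a : ι → ℝ) (i : ι) :
    Integrable (fun ω => (∑ j ∈ s, a j * if X j ω ≤ X i ω then 1 else 0) ^ 2) P := by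
  simp_rw [sq_sum_mul_eq_sum_sum]
  exact integrable_finsetSum _ fun j _ => integrable_finsetSum _ fun k _ =>
    (integrable_ite_le_mul_ite_le hX i j k).const_mul _

theorem iIndepFun.integral_sq_sum_mul_ite_le [IsProbabilityMeasure P] [NullSingletonClass μ]
    (hX : ∀ i, Measurable (X i)) (h : iIndepFun X P) (hlaw : ∀ i, P.map (X i) = μ)
    {s : Finset ι} {a : ι → ℝ} (ha : ∑ j ∈ s, a j = 0) {i : ι} (hi : i ∈ s) :
    ∫ ω, (∑ j ∈ s, a j * if X j ω ≤ X i ω then 1 else 0) ^ 2 ∂P =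
      (∑ j ∈ s, a j ^ 2 + a i ^ 2) / 6 := by
  simp_rw [sq_sum_mul_eq_sum_sum]
  rw [integral_finsetSum _ fun j _ => integrable_finsetSum _ fun k _ =>
    (integrable_ite_le_mul_ite_le hX i j k).const_mul _]
  simp_rw [integral_finsetSum _ fun k _ => (integrable_ite_le_mul_ite_le hX i _ k).const_mul _,
    integral_const_mul, h.integral_ite_le_mul_ite_le hX hlaw]
  exact sum_sum_mul_mul_inv_card_triple ha hi

end Moments

end ProbabilityTheory

noncomputable def cvmWeight (n c j : ℕ) : ℝ := if j < c then (c : ℝ)⁻¹ else -((n : ℝ) - c)⁻¹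

theorem sum_range_cvmWeight {n c : ℕ} (hcn : c ≤ n) (f : ℕ → ℝ → ℝ) :
    ∑ j ∈ range n, f j (cvmWeight n c j) =
      ∑ j ∈ range c, f j (c : ℝ)⁻¹ + ∑ j ∈ Ico c n, f j (-((n : ℝ) - c)⁻¹) := by
  rw [← sum_range_add_sum_Ico _ hcn]
  congr 1 <;> refine sum_congr rfl fun j hj => ?_
  · rw [cvmWeight, if_pos (mem_range.1 hj)]
  · rw [cvmWeight, if_neg (mem_Ico.1 hj).1.not_gt]

theorem cvmW_eq_sum_sq (x : ℕ → ℝ) {n c : ℕ} (hcn : c ≤ n) :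
    cvmW x n c = c * (n - c) / n ^ 2 *
      ∑ i ∈ range n, (∑ j ∈ range n, cvmWeight n c j * if x j ≤ x i then 1 else 0) ^ 2 := by
  have hinner (i : ℕ) : ∑ j ∈ range n, cvmWeight n c j * (if x j ≤ x i then 1 else 0) =
      (∑ j ∈ range c, if x j ≤ x i then 1 else 0) / c -
        (∑ j ∈ Ico c n, if x j ≤ x i then 1 else 0) / ((n : ℝ) - c) := by
    rw [sum_range_cvmWeight hcn fun j w => w * if x j ≤ x i then 1 else 0, ← mul_sum, ← mul_sum]
    ring
  simp_rw [cvmW, hinner]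
  ring

theorem sum_cvmWeight {n c : ℕ} (hc : 0 < c) (hcn : c < n) :
    ∑ j ∈ range n, cvmWeight n c j = 0 := by
  have hnc : (n : ℝ) - c ≠ 0 := sub_ne_zero.2 (by exact_mod_cast hcn.ne')
  rw [sum_range_cvmWeight hcn.le fun _ w => w]
  simp [Nat.cast_sub hcn.le, hnc, hc.ne']

theorem sum_cvmWeight_sq {n c : ℕ} (hc : 0 < c) (hcn : c < n) :
    ∑ j ∈ range n, cvmWeight n c j ^ 2 = n / (c * (n - c)) := by
  have hnc : (n : ℝ) - c ≠ 0 := sub_ne_zero.2 (by exact_mod_cast hcn.ne')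
  rw [sum_range_cvmWeight hcn.le fun _ w => w ^ 2]
  simp only [inv_pow, sum_const, card_range, nsmul_eq_mul, even_two, Even.neg_pow, Nat.card_Ico,
    Nat.cast_sub hcn.le]
  field_simp
  ring

/-- for i.i.d. observations with a continuous cdf and any `1 ≤ c ≤ n-1`,
`E[W_n(c)] = 1/6 + 1/(6n)`. -/
theorem cvmW_mean
    {Ω : Type*} [MeasurableSpace Ω] {P : Measure Ω} [IsProbabilityMeasure P]
    (X : ℕ → Ω → ℝ) (hXmeas : ∀ i, Measurable (X i))
    (hXindep : iIndepFun X P)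
    (μ : Measure ℝ) (hXlaw : ∀ i, Measure.map (X i) P = μ)
    (hcont : Continuous fun x => (μ (Set.Iic x)).toReal)
    (n c : ℕ) (hc : 1 ≤ c) (hcn : c ≤ n - 1) :
    ∫ ω, cvmW (fun i => X i ω) n c ∂P = 1 / 6 + 1 / (6 * n) := by
  have : IsProbabilityMeasure μ :=
    hXlaw 0 ▸ Measure.isProbabilityMeasure_map (hXmeas 0).aemeasurable
  have : NullSingletonClass μ := nullSingletonClass_of_continuous_cdf hcont
  have hcn' : c < n := by omega
  have hn : (n : ℝ) ≠ 0 := by norm_cast; omega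
  have hnc : (n : ℝ) - c ≠ 0 := sub_ne_zero.2 (by norm_cast; omega)
  simp_rw [cvmW_eq_sum_sq _ hcn'.le]
  rw [integral_const_mul, integral_finsetSum _ fun i _ => integrable_sq_sum_mul_ite_le hXmeas _ _ i,
    sum_congr rfl fun i hi =>
      hXindep.integral_sq_sum_mul_ite_le hXmeas hXlaw (sum_cvmWeight hc hcn') hi,
    ← sum_div, sum_add_distrib, sum_const, card_range, nsmul_eq_mul, sum_cvmWeight_sq hc hcn']
  field_simp
end

section
/- Let X_1, ..., X_n (n ≥ 2) be independent real random variables, each with variance σ², such that E[X_i] = μ for 1 ≤ i ≤ c and E[X_i] = μ + Δ for c < i ≤ n, where 1 ≤ c < n. Define s₁² = Σ_{i=1}^{n−1} (X_{i+1} − X_i)² / (2(n−1)). Then E[s₁²] = σ² + Δ²/(2(n−1)); in particular, when Δ = 0 (no change in mean) the estimator s₁² is unbiased for σ². -/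
open MeasureTheory ProbabilityTheory

/-!
Independence kills the covariance, so `E[(X_{i+1} - X_i)²] = 2σ² + (E X_{i+1} - E X_i)²`.
Summing over the `n - 1` successive pairs gives `2(n-1)σ²` plus the sum of the squared jumps
of the mean sequence, and a mean sequence with a single step of size `Δ` contributes exactly `Δ²`.
-/

namespace ProbabilityTheory

variable {Ω : Type*} [MeasurableSpace Ω] {P : Measure Ω} [IsProbabilityMeasure P]

lemma IndepFun.integral_sub_sq {X Y : Ω → ℝ} (hX : MemLp X 2 P) (hY : MemLp Y 2 P)
    (h : IndepFun X Y P) :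
    ∫ ω, (X ω - Y ω) ^ 2 ∂P = variance X P + variance Y P + (P[X] - P[Y]) ^ 2 := by
  have hvar := variance_eq_sub (hX.sub hY)
  simp only [Pi.pow_apply, Pi.sub_apply] at hvar
  rw [variance_sub hX hY, h.covariance_eq_zero hX hY,
    integral_sub (hX.integrable one_le_two) (hY.integrable one_le_two)] at hvar
  linarith

lemma iIndepFun.integral_sum_range_sub_sq {X : ℕ → Ω → ℝ} (hX : iIndepFun X P) {m : ℕ}
    (hL2 : ∀ i ≤ m, MemLp (X i) 2 P) {σ2 : ℝ} (hvar : ∀ i ≤ m, variance (X i) P = σ2) :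
    ∫ ω, ∑ i ∈ Finset.range m, (X (i + 1) ω - X i ω) ^ 2 ∂P =
      2 * m * σ2 + ∑ i ∈ Finset.range m, (P[X (i + 1)] - P[X i]) ^ 2 := by
  have hint : ∀ i ∈ Finset.range m, Integrable (fun ω => (X (i + 1) ω - X i ω) ^ 2) P :=
    fun i hi =>
      have hi : i < m := Finset.mem_range.1 hi
      ((hL2 _ hi).sub (hL2 _ hi.le)).integrable_sq
  rw [integral_finsetSum _ hint]
  calc ∑ i ∈ Finset.range m, ∫ ω, (X (i + 1) ω - X i ω) ^ 2 ∂P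
      = ∑ i ∈ Finset.range m, (2 * σ2 + (P[X (i + 1)] - P[X i]) ^ 2) := by
        refine Finset.sum_congr rfl fun i hi => ?_
        have hi : i < m := Finset.mem_range.1 hi
        rw [IndepFun.integral_sub_sq (hL2 _ hi) (hL2 _ hi.le) (hX.indepFun (by omega)),
          hvar _ hi, hvar _ hi.le]
        ring
    _ = 2 * m * σ2 + ∑ i ∈ Finset.range m, (P[X (i + 1)] - P[X i]) ^ 2 := by
        rw [Finset.sum_add_distrib, Finset.sum_const, Finset.card_range, nsmul_eq_mul]
        ring

end ProbabilityTheory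

lemma sum_range_sub_sq_of_step {m : ℕ → ℝ} {n c : ℕ} {μ Δ : ℝ} (hc : 1 ≤ c) (hcn : c < n)
    (hbefore : ∀ i, i < c → m i = μ) (hafter : ∀ i, c ≤ i → i < n → m i = μ + Δ) :
    ∑ i ∈ Finset.range (n - 1), (m (i + 1) - m i) ^ 2 = Δ ^ 2 := by
  have hjump : ∀ i ∈ Finset.range (n - 1),
      (m (i + 1) - m i) ^ 2 = if c - 1 = i then Δ ^ 2 else 0 := by
    intro i hi
    have hi : i < n - 1 := Finset.mem_range.1 hi
    split_ifs with h
    · rw [hbefore i (by omega), hafter (i + 1) (by omega) (by omega)]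
      ring
    · rcases lt_or_ge (i + 1) c with hlt | hge
      · rw [hbefore i (by omega), hbefore (i + 1) hlt]
        ring
      · rw [hafter i (by omega) (by omega), hafter (i + 1) hge (by omega)]
        ring
  rw [Finset.sum_congr rfl hjump, Finset.sum_ite_eq, if_pos (Finset.mem_range.2 (by omega))]

theorem successive_differences_mean_general
    {Ω : Type*} [MeasurableSpace Ω] {P : Measure Ω} [IsProbabilityMeasure P]
    (n : ℕ) (c : ℕ) (hc : 1 ≤ c) (hcn : c < n)
    (X : ℕ → Ω → ℝ)
    (hXindep : iIndepFun X P)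
    (hL2 : ∀ i, i < n → MemLp (X i) 2 P)
    (σ2 : ℝ) (hvar : ∀ i, i < n → variance (X i) P = σ2)
    (μ Δ : ℝ)
    (hmean1 : ∀ i, i < c → ∫ ω, X i ω ∂P = μ)
    (hmean2 : ∀ i, c ≤ i → i < n → ∫ ω, X i ω ∂P = μ + Δ) :
    ∫ ω, (∑ i ∈ Finset.range (n - 1), (X (i + 1) ω - X i ω) ^ 2) / (2 * ((n : ℝ) - 1)) ∂P =
      σ2 + Δ ^ 2 / (2 * ((n : ℝ) - 1)) := by
  have hn1 : (1 : ℝ) < n := by exact_mod_cast hc.trans_lt hcn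
  rw [integral_div, hXindep.integral_sum_range_sub_sq (fun i hi => hL2 i (by omega))
      (fun i hi => hvar i (by omega)), sum_range_sub_sq_of_step hc hcn hmean1 hmean2,
    Nat.cast_pred (by omega)]
  field_simp [(by linarith : (n : ℝ) - 1 ≠ 0)]

/-- if `X_1,…,X_n` (`n ≥ 2`) are independent with common variance `σ²`,
mean `μ` before the change point `c` and mean `μ + Δ` after it, then the
successive-differences estimator `s₁² = ∑_{i=1}^{n-1}(X_{i+1}-X_i)²/(2(n-1))` has
expectation `σ² + Δ²/(2(n-1))`; in particular it is unbiased for `σ²` when `Δ = 0`.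
(Observations are indexed `0,…,n-1`, so `X_1,…,X_c` correspond to indices `i < c`.) -/
theorem successive_differences_mean
    {Ω : Type*} [MeasurableSpace Ω] {P : Measure Ω} [IsProbabilityMeasure P]
    (n : ℕ) (hn : 2 ≤ n) (c : ℕ) (hc : 1 ≤ c) (hcn : c < n)
    (X : ℕ → Ω → ℝ) (hXmeas : ∀ i, Measurable (X i))
    (hXindep : iIndepFun X P)
    (hL2 : ∀ i, i < n → MemLp (X i) 2 P)
    (σ2 : ℝ) (hvar : ∀ i, i < n → variance (X i) P = σ2)
    (μ Δ : ℝ)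
    (hmean1 : ∀ i, i < c → ∫ ω, X i ω ∂P = μ)
    (hmean2 : ∀ i, c ≤ i → i < n → ∫ ω, X i ω ∂P = μ + Δ) :
    ∫ ω, (∑ i ∈ Finset.range (n - 1), (X (i + 1) ω - X i ω) ^ 2) / (2 * ((n : ℝ) - 1)) ∂P =
      σ2 + Δ ^ 2 / (2 * ((n : ℝ) - 1)) :=
  successive_differences_mean_general n c hc hcn X hXindep hL2 σ2 hvar μ Δ hmean1 hmean2
end

section
/- Let X_1, ..., X_n be i.i.d. real random variables with a continuous cumulative distribution function H, and let U_1, ..., U_n be i.i.d. uniform random variables on [0,1]. Then the averaged two-sample Cramér–von Mises statistic is distribution free: the law of W̄_n(X_1,...,X_n) equals the law of W̄_n(U_1,...,U_n); moreover W̄_n(X_1,...,X_n) = W̄_n(H(X_1),...,H(X_n)) almost surely. -/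
open MeasureTheory ProbabilityTheory Filter Real

/-- Averaged two-sample Cramér–von Mises statistic `W̄_n`. -/
noncomputable def cvmWbar (X : ℕ → ℝ) (n : ℕ) : ℝ :=
  (∑ c ∈ Finset.Icc 1 (n - 1), cvmW X n c) / ((n : ℝ) - 1)

/-!
`W̄_n` only sees the relative order of the sample. The cdf `H` is monotone, and since it is
continuous the `H(X_i)` are i.i.d. uniform on `[0,1]` (probability integral transform); in
particular they almost surely have no ties, and then the `X_i` and the `H(X_i)` are ordered
alike. The law of `W̄_n(H(X_1), …, H(X_n))` is a function of the common law of the `H(X_i)`,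
which is that of the `U_i`.
-/

lemma cvmWbar_congr {Y Z : ℕ → ℝ} {n : ℕ}
    (h : ∀ i < n, ∀ j < n, Y i ≤ Y j ↔ Z i ≤ Z j) :
    cvmWbar Y n = cvmWbar Z n := by
  unfold cvmWbar cvmW
  congr 1
  refine Finset.sum_congr rfl fun c hc => ?_
  congr 2
  refine Finset.sum_congr rfl fun i hi => ?_
  have hi := Finset.mem_range.1 hi
  congr 3 <;> refine Finset.sum_congr rfl fun k hk => if_congr (h k ?_ i hi) rfl rfl
  · have := Finset.mem_Icc.1 hc
    have := Finset.mem_range.1 hk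
    omega
  · exact (Finset.mem_Ico.1 hk).2

lemma measurable_cvmWbar (n : ℕ) : Measurable fun Y : ℕ → ℝ => cvmWbar Y n := by
  have hind (i j : ℕ) : Measurable fun Y : ℕ → ℝ => if Y i ≤ Y j then (1 : ℝ) else 0 :=
    .ite (measurableSet_le (measurable_pi_apply i) (measurable_pi_apply j)) measurable_const
      measurable_const
  unfold cvmWbar cvmW
  fun_prop

lemma cvmWbar_comp_of_monotone {f : ℝ → ℝ} (hf : Monotone f) {Y : ℕ → ℝ} {n : ℕ}
    (hties : ∀ i < n, ∀ j < n, f (Y i) = f (Y j) → i = j) :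
    cvmWbar (fun i => f (Y i)) n = cvmWbar Y n := by
  refine cvmWbar_congr fun i hi j hj => ⟨fun hle => not_lt.1 fun hlt => ?_, fun hle => hf hle⟩
  obtain rfl := hties i hi j hj (hle.antisymm (hf hlt.le))
  exact hlt.false

namespace ProbabilityTheory

section

variable {Ω β : Type*} [MeasurableSpace Ω] [MeasurableSpace β] {P : Measure Ω}

lemma IndepFun.ae_ne [IsFiniteMeasure P] [MeasurableEq β] {f g : Ω → β} (hf : Measurable f)
    (hg : Measurable g) (hfg : IndepFun f g P) [NullSingletonClass (P.map g)] :
    ∀ᵐ ω ∂P, f ω ≠ g ω := by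
  have hdiag : MeasurableSet (Set.diagonal β) := measurableSet_diagonal
  have hfiber (x : β) : Prod.mk x ⁻¹' Set.diagonal β = {x} := by ext; simp [eq_comm]
  rw [ae_iff]
  simp only [ne_eq, not_not]
  change P ((fun ω => (f ω, g ω)) ⁻¹' Set.diagonal β) = 0
  rw [← Measure.map_apply (hf.prodMk hg) hdiag,
    (indepFun_iff_map_prod_eq_prod_map_map hf.aemeasurable hg.aemeasurable).1 hfg,
    Measure.prod_apply hdiag]
  simp [hfiber]

lemma iIndepFun.ae_pairwise_ne [MeasurableEq β] {ι : Type*} [Countable ι] {X : ι → Ω → β}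
    [∀ i, NullSingletonClass (P.map (X i))] (hX : ∀ i, Measurable (X i))
    (hindep : iIndepFun X P) :
    ∀ᵐ ω ∂P, Pairwise fun i j => X i ω ≠ X j ω := by
  have := hindep.isProbabilityMeasure
  simp only [Pairwise, ae_all_iff]
  intro i j
  rcases eq_or_ne i j with rfl | hij
  · exact fun h => (h rfl).elim
  · exact fun _ => (hindep.indepFun hij).ae_ne (hX i) (hX j)

end

lemma iIndepFun.map_comp_eq {ι Ω Ω' β γ : Type*} [MeasurableSpace Ω] [MeasurableSpace Ω']
    [MeasurableSpace β] [MeasurableSpace γ] {P : Measure Ω} {P' : Measure Ω'}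
    {X : ι → Ω → β} {Y : ι → Ω' → β} {F : (ι → β) → γ} (hF : Measurable F)
    (hX : ∀ i, Measurable (X i)) (hY : ∀ i, Measurable (Y i))
    (hXindep : iIndepFun X P) (hYindep : iIndepFun Y P')
    (hlaw : ∀ i, P.map (X i) = P'.map (Y i)) :
    P.map (fun ω => F fun i => X i ω) = P'.map (fun ω => F fun i => Y i ω) :=
  calc P.map (fun ω => F fun i => X i ω) = (P.map fun ω i => X i ω).map F :=
        (Measure.map_map hF (measurable_pi_lambda _ hX)).symm
    _ = (P'.map fun ω i => Y i ω).map F := by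
        rw [hXindep.map_fun_eq_infinitePi_map hX, hYindep.map_fun_eq_infinitePi_map hY]
        simp_rw [hlaw]
    _ = P'.map (fun ω => F fun i => Y i ω) := Measure.map_map hF (measurable_pi_lambda _ hY)

open Set

lemma measure_cdf_preimage_Iic (μ : Measure ℝ) [IsProbabilityMeasure μ]
    (hcont : Continuous (cdf μ)) (t : ℝ) :
    μ (cdf μ ⁻¹' Iic t) = ENNReal.ofReal (min t 1) := by
  rcases le_or_gt 1 t with ht1 | ht1
  · have : cdf μ ⁻¹' Iic t = univ := eq_univ_of_forall fun x => (cdf_le_one μ x).trans ht1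
    simp [this, ht1]
  rw [min_eq_left ht1.le]
  obtain ⟨b, hb⟩ := ((tendsto_cdf_atTop μ).eventually (eventually_gt_nhds ht1)).exists
  refine le_antisymm ?_ ?_
  · rcases (cdf μ ⁻¹' Iic t).eq_empty_or_nonempty with hS | hS
    · simp [hS]
    have hbdd : BddAbove (cdf μ ⁻¹' Iic t) :=
      ⟨b, fun x hx => ((monotone_cdf μ).reflect_lt (lt_of_le_of_lt hx hb)).le⟩
    have hmax := (isClosed_Iic.preimage hcont).csSup_mem hS hbdd
    calc μ (cdf μ ⁻¹' Iic t) ≤ μ (Iic (sSup (cdf μ ⁻¹' Iic t))) :=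
          measure_mono fun x hx => le_csSup hbdd hx
      _ = ENNReal.ofReal (cdf μ (sSup (cdf μ ⁻¹' Iic t))) := (ofReal_cdf μ _).symm
      _ ≤ ENNReal.ofReal t := ENNReal.ofReal_le_ofReal hmax
  · rcases le_or_gt t 0 with ht0 | ht0
    · simp [ENNReal.ofReal_of_nonpos ht0]
    obtain ⟨a, ha⟩ := ((tendsto_cdf_atBot μ).eventually (eventually_lt_nhds ht0)).exists
    obtain ⟨c, hc⟩ := mem_range_of_exists_le_of_exists_ge hcont ⟨a, ha.le⟩ ⟨b, hb.le⟩
    calc ENNReal.ofReal t = μ (Iic c) := by rw [← hc, ofReal_cdf]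
      _ ≤ μ (cdf μ ⁻¹' Iic t) := measure_mono fun x hx => (monotone_cdf μ hx).trans hc.le

lemma map_cdf_eq_volume_restrict_Icc (μ : Measure ℝ) [IsProbabilityMeasure μ]
    (hcont : Continuous (cdf μ)) :
    μ.map (cdf μ) = volume.restrict (Icc 0 1) := by
  refine Measure.ext_of_Iic _ _ fun t => ?_
  have hIcc : Iic t ∩ Icc 0 1 = Icc 0 (min t 1) := by
    ext x
    simp only [mem_inter_iff, mem_Iic, mem_Icc, le_min_iff]
    tauto
  rw [Measure.map_apply hcont.measurable measurableSet_Iic,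
    Measure.restrict_apply measurableSet_Iic, measure_cdf_preimage_Iic μ hcont, hIcc,
    Real.volume_Icc, sub_zero]

end ProbabilityTheory

theorem cvmWbar_distribution_free_general
    {Ω : Type*} [MeasurableSpace Ω] {P : Measure Ω} [IsProbabilityMeasure P]
    (X : ℕ → Ω → ℝ) (hXmeas : ∀ i, Measurable (X i))
    (hXindep : iIndepFun X P)
    (μ : Measure ℝ) (hXlaw : ∀ i, Measure.map (X i) P = μ)
    (H : ℝ → ℝ) (hH : ∀ x, H x = (μ (Set.Iic x)).toReal) (hcont : Continuous H)
    {Ω' : Type*} [MeasurableSpace Ω'] {P' : Measure Ω'}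
    (U : ℕ → Ω' → ℝ) (hUmeas : ∀ i, Measurable (U i))
    (hUindep : iIndepFun U P')
    (hUlaw : ∀ i, Measure.map (U i) P' = volume.restrict (Set.Icc (0 : ℝ) 1))
    (n : ℕ) :
    Measure.map (fun ω => cvmWbar (fun i => X i ω) n) P =
      Measure.map (fun ω' => cvmWbar (fun i => U i ω') n) P' ∧
    ∀ᵐ ω ∂P, cvmWbar (fun i => X i ω) n = cvmWbar (fun i => H (X i ω)) n := by
  have : IsProbabilityMeasure μ :=
    hXlaw 0 ▸ Measure.isProbabilityMeasure_map (hXmeas 0).aemeasurable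
  obtain rfl : H = cdf μ := funext fun x => (hH x).trans (cdf_eq_real μ x).symm
  have hYmeas (i : ℕ) : Measurable fun ω => cdf μ (X i ω) := hcont.measurable.comp (hXmeas i)
  have hYindep : iIndepFun (fun i ω => cdf μ (X i ω)) P :=
    hXindep.comp (fun _ => cdf μ) fun _ => hcont.measurable
  have hYlaw (i : ℕ) :
      P.map (fun ω => cdf μ (X i ω)) = volume.restrict (Set.Icc (0 : ℝ) 1) :=
    (Measure.map_map hcont.measurable (hXmeas i)).symm.trans
      (by rw [hXlaw i, map_cdf_eq_volume_restrict_Icc μ hcont])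
  have (i : ℕ) : NullSingletonClass (P.map fun ω => cdf μ (X i ω)) := hYlaw i ▸ inferInstance
  have hrank :
      ∀ᵐ ω ∂P, cvmWbar (fun i => X i ω) n = cvmWbar (fun i => cdf μ (X i ω)) n := by
    filter_upwards [hYindep.ae_pairwise_ne hYmeas] with ω hω
    exact (cvmWbar_comp_of_monotone (monotone_cdf μ) fun i _ j _ h =>
      by_contra fun hij => hω hij h).symm
  refine ⟨?_, hrank⟩
  rw [Measure.map_congr hrank]
  exact hYindep.map_comp_eq (measurable_cvmWbar n) hYmeas hUmeas hUindep fun i =>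
    (hYlaw i).trans (hUlaw i).symm

/-- the averaged two-sample Cramér–von Mises statistic is distribution free:
for i.i.d. `X_i` with continuous cdf `H` and i.i.d. uniform `U_i`, the law of
`W̄_n(X_1,…,X_n)` equals the law of `W̄_n(U_1,…,U_n)`, and
`W̄_n(X_1,…,X_n) = W̄_n(H(X_1),…,H(X_n))` almost surely. -/
theorem cvmWbar_distribution_free
    {Ω : Type*} [MeasurableSpace Ω] {P : Measure Ω} [IsProbabilityMeasure P]
    (X : ℕ → Ω → ℝ) (hXmeas : ∀ i, Measurable (X i))
    (hXindep : iIndepFun X P)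
    (μ : Measure ℝ) (hXlaw : ∀ i, Measure.map (X i) P = μ)
    (H : ℝ → ℝ) (hH : ∀ x, H x = (μ (Set.Iic x)).toReal) (hcont : Continuous H)
    {Ω' : Type*} [MeasurableSpace Ω'] {P' : Measure Ω'} [IsProbabilityMeasure P']
    (U : ℕ → Ω' → ℝ) (hUmeas : ∀ i, Measurable (U i))
    (hUindep : iIndepFun U P')
    (hUlaw : ∀ i, Measure.map (U i) P' = volume.restrict (Set.Icc (0 : ℝ) 1))
    (n : ℕ) :
    Measure.map (fun ω => cvmWbar (fun i => X i ω) n) P =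
      Measure.map (fun ω' => cvmWbar (fun i => U i ω') n) P' ∧
    ∀ᵐ ω ∂P, cvmWbar (fun i => X i ω) n = cvmWbar (fun i => H (X i ω)) n :=
  cvmWbar_distribution_free_general X hXmeas hXindep μ hXlaw H hH hcont U hUmeas hUindep hUlaw n
end
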